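/- For every M > 0 there exist ε₀ ∈ (0,1] and C ≥ 1 such that for all k ∈ 𝕋, all |η| ≤ M and all ε ∈ (0,ε₀]: (i) C⁻¹·(R(k) + (εη)²) ≤ R_ε ≤ C·(R(k) + (εη)²); (ii) C⁻¹·R_ε ≤ ω̄ ≤ C·R_ε; (iii) |Δω·R′(k)| ≤ C·ε·R_ε; and (iv) for every λ > 0, |D̃_j| ≤ C·(R_ε + λε²) for each j ∈ {1, 2, +, −}. -/

import Mathlib

noncomputable section

open Real Matrix Complex

/-- Dispersion relation `ω(k) = 2√α·sin²(πk)`. -/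
def ω (α k : ℝ) : ℝ := 2 * Real.sqrt α * Real.sin (π * k) ^ 2

/-- `R(k) = 2·sin²(πk)·(1 + 2cos²(πk))`. -/
def R (k : ℝ) : ℝ := 2 * Real.sin (π * k) ^ 2 * (1 + 2 * Real.cos (π * k) ^ 2)

/-- `R′(k) = 2π·(sin(2πk) + sin(4πk))`. -/
def R' (k : ℝ) : ℝ := 2 * π * (Real.sin (2 * π * k) + Real.sin (4 * π * k))

/-- `R″(k) = 4π²·(4cos²(2πk) + cos(2πk) − 2)`. -/
def R'' (k : ℝ) : ℝ := 4 * π ^ 2 * (4 * Real.cos (2 * π * k) ^ 2 + Real.cos (2 * π * k) - 2)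

/-- `R_ε = R(k) + ((εη)²/8)·R″(k)`. -/
def Rε (ε η k : ℝ) : ℝ := R k + (ε * η) ^ 2 / 8 * R'' k

/-- `ω̄ = (ω(k + εη/2) + ω(k − εη/2))/2`. -/
def ωbar (α ε η k : ℝ) : ℝ := (ω α (k + ε * η / 2) + ω α (k - ε * η / 2)) / 2

/-- `Δω = ω(k + εη/2) − ω(k − εη/2)`. -/
def Δω (α ε η k : ℝ) : ℝ := ω α (k + ε * η / 2) - ω α (k - ε * η / 2)

/-- `D̃₁ = ε²λ + 2γR_ε + i·Δω`. -/
def D₁ (α γ ε lam η k : ℝ) : ℂ :=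
  (ε ^ 2 * lam + 2 * γ * Rε ε η k : ℝ) + Complex.I * (Δω α ε η k : ℝ)

/-- `D̃₂ = ε²λ + 2γR_ε + 2i·ω̄`. -/
def D₂ (α γ ε lam η k : ℝ) : ℂ :=
  (ε ^ 2 * lam + 2 * γ * Rε ε η k : ℝ) + 2 * Complex.I * (ωbar α ε η k : ℝ)

/-- `D̃₊ = −γR_ε + (γε/2)·R′(k)·η`. -/
def Dplus (γ ε η k : ℝ) : ℝ := -γ * Rε ε η k + γ * ε / 2 * R' k * η

/-- `D̃₋ = −γR_ε − (γε/2)·R′(k)·η`. -/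
def Dminus (γ ε η k : ℝ) : ℝ := -γ * Rε ε η k - γ * ε / 2 * R' k * η

/-- The 4×4 matrix `D̃_ε(λ,η,k)`. -/
def Dmat (α γ ε lam η k : ℝ) : Matrix (Fin 4) (Fin 4) ℂ :=
  !![D₁ α γ ε lam η k, (Dplus γ ε η k : ℂ), (Dminus γ ε η k : ℂ), 0;
     (Dplus γ ε η k : ℂ), D₂ α γ ε lam η k, 0, (Dminus γ ε η k : ℂ);
     (Dminus γ ε η k : ℂ), 0, (starRingEnd ℂ) (D₂ α γ ε lam η k), (Dplus γ ε η k : ℂ);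
     0, (Dminus γ ε η k : ℂ), (Dplus γ ε η k : ℂ), (starRingEnd ℂ) (D₁ α γ ε lam η k)]

/-- `δ̃_ε(λ,η,k) = det D̃_ε(λ,η,k)`. -/
def δdet (α γ ε lam η k : ℝ) : ℂ := (Dmat α γ ε lam η k).det


/-!
Write `x = cos (2πk)` and `y = πεη`. Then every quantity is an explicit trigonometric
polynomial: `R = (1 - x)(2 + x)`, `R_ε = R + y²/2 · (4x² + x - 2)`,
`ω̄ = √α (1 - x cos y)`, `Δω = 2√α sin (2πk) sin y` and `R′ = 2π sin (2πk) (1 + 2x)`.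
For `|y| ≤ 1/4`, both `R_ε` and `ω̄/√α` are comparable to `R + y²`: the correction
`4x² + x - 2` can only be negative away from `x = 1`, where `R` is bounded below, and
`1 - x cos y = (1 - x) + x (1 - cos y)` with `1 - cos y ≍ y²`. The remaining bounds follow from
`sin² (2πk) ≤ R` and `2|ab| ≤ a² + b²`; choosing `ε₀ ≍ 1/M` makes `|y| ≤ 1/4`.
-/

lemma R_eq_cos (k : ℝ) : R k = (1 - Real.cos (2 * π * k)) * (2 + Real.cos (2 * π * k)) := by
  rw [R, show 2 * π * k = 2 * (π * k) by ring, Real.cos_two_mul]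
  linear_combination (2 + 4 * Real.cos (π * k) ^ 2) * Real.sin_sq_add_cos_sq (π * k)

lemma Rε_eq_R_add (ε η k : ℝ) : Rε ε η k =
    R k + (π * (ε * η)) ^ 2 / 2 * (4 * Real.cos (2 * π * k) ^ 2 + Real.cos (2 * π * k) - 2) := by
  rw [Rε, R'']; ring

lemma R'_eq_sin (k : ℝ) :
    R' k = 2 * π * (Real.sin (2 * π * k) * (1 + 2 * Real.cos (2 * π * k))) := by
  rw [R', show 4 * π * k = 2 * (2 * π * k) by ring, Real.sin_two_mul]; ring

lemma ω_eq_cos (α k : ℝ) : ω α k = √α * (1 - Real.cos (2 * π * k)) := by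
  rw [ω, show 2 * π * k = 2 * (π * k) by ring, Real.cos_two_mul]
  linear_combination 2 * √α * Real.sin_sq_add_cos_sq (π * k)

lemma ωbar_eq_cos (α ε η k : ℝ) :
    ωbar α ε η k = √α * (1 - Real.cos (2 * π * k) * Real.cos (π * (ε * η))) := by
  rw [ωbar, ω_eq_cos, ω_eq_cos, show 2 * π * (k + ε * η / 2) = 2 * π * k + π * (ε * η) by ring,
    show 2 * π * (k - ε * η / 2) = 2 * π * k - π * (ε * η) by ring, Real.cos_add, Real.cos_sub]
  ring

lemma Δω_eq_sin (α ε η k : ℝ) :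
    Δω α ε η k = 2 * √α * (Real.sin (2 * π * k) * Real.sin (π * (ε * η))) := by
  rw [Δω, ω_eq_cos, ω_eq_cos, show 2 * π * (k + ε * η / 2) = 2 * π * k + π * (ε * η) by ring,
    show 2 * π * (k - ε * η / 2) = 2 * π * k - π * (ε * η) by ring, Real.cos_add, Real.cos_sub]
  ring

lemma sin_sq_le_R (k : ℝ) : Real.sin (2 * π * k) ^ 2 ≤ R k := by
  rw [R_eq_cos, Real.sin_sq]
  nlinarith [Real.cos_le_one (2 * π * k)]

lemma ωbar_nonneg (α ε η k : ℝ) : 0 ≤ ωbar α ε η k := by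
  rw [ωbar_eq_cos]
  refine mul_nonneg (Real.sqrt_nonneg α) (sub_nonneg.2 ?_)
  calc Real.cos (2 * π * k) * Real.cos (π * (ε * η))
      ≤ |Real.cos (2 * π * k) * Real.cos (π * (ε * η))| := le_abs_self _
    _ ≤ 1 := by
      rw [abs_mul]
      exact mul_le_one₀ (Real.abs_cos_le_one _) (abs_nonneg _) (Real.abs_cos_le_one _)

lemma R_nonneg (k : ℝ) : 0 ≤ R k := (sq_nonneg _).trans (sin_sq_le_R k)

lemma abs_one_add_two_mul_cos_le (θ : ℝ) : |1 + 2 * Real.cos θ| ≤ 3 :=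
  abs_le.2 ⟨by linarith [Real.neg_one_le_cos θ], by linarith [Real.cos_le_one θ]⟩

lemma quadratic_perturbation_bounds {x y : ℝ} (hx₁ : -1 ≤ x) (hx₂ : x ≤ 1) (hy : |y| ≤ 1 / 4) :
    ((1 - x) * (2 + x) + y ^ 2) / 3 ≤ (1 - x) * (2 + x) + y ^ 2 / 2 * (4 * x ^ 2 + x - 2) ∧
      (1 - x) * (2 + x) + y ^ 2 / 2 * (4 * x ^ 2 + x - 2) ≤ 2 * ((1 - x) * (2 + x) + y ^ 2) := by
  have hy2 : y ^ 2 ≤ 1 / 16 := by nlinarith [sq_abs y, abs_nonneg y]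
  have hy0 := sq_nonneg y
  constructor
  · rcases le_or_gt (9 / 10) x with hx | hx
    · nlinarith [mul_nonneg (sub_nonneg.2 hx₂) (by linarith : (0:ℝ) ≤ 2 + x)]
    · nlinarith [sq_nonneg (x + 1 / 8)]
  · have hpoly : 4 * x ^ 2 + x - 2 ≤ 3 := by nlinarith
    nlinarith [mul_nonneg hy0 (sub_nonneg.2 hpoly),
      mul_nonneg (sub_nonneg.2 hx₂) (by linarith : (0:ℝ) ≤ 2 + x)]

lemma one_sub_mul_cos_bounds {x y : ℝ} (hx₁ : -1 ≤ x) (hx₂ : x ≤ 1) (hy : |y| ≤ 1) :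
    ((1 - x) * (2 + x) + y ^ 2) / 16 ≤ 1 - x * Real.cos y ∧
      1 - x * Real.cos y ≤ (1 - x) * (2 + x) + y ^ 2 := by
  have hy2 : y ^ 2 ≤ 1 := by nlinarith [sq_abs y, abs_nonneg y]
  have hcos_lo := Real.one_sub_sq_div_two_le_cos (x := y)
  have hcos_hi : Real.cos y ≤ 1 - y ^ 2 / 8 := by
    have hπ := Real.pi_le_four
    have h := Real.cos_le_one_sub_mul_cos_sq (hy.trans (by linarith [Real.pi_gt_three]))
    have : 1 / 8 ≤ 2 / π ^ 2 := by
      rw [div_le_div_iff₀ (by norm_num) (by positivity)]; nlinarith [Real.pi_pos]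
    nlinarith [sq_nonneg y]
  constructor
  · rcases le_or_gt x (1 / 2) with hx | hx
    · nlinarith [mul_nonneg (sub_nonneg.2 hx₂) (by linarith : (0:ℝ) ≤ 2 + x)]
    · nlinarith
  · rcases le_or_gt 0 x with hx | hx
    · nlinarith
    · nlinarith [Real.cos_le_one y]

lemma abs_Δω_le (α ε η k : ℝ) : |Δω α ε η k| ≤ √α * (R k + (π * (ε * η)) ^ 2) := by
  have hsw : 2 * |Real.sin (2 * π * k) * Real.sin (π * (ε * η))| ≤ R k + (π * (ε * η)) ^ 2 := by
    rw [abs_mul]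
    nlinarith [two_mul_le_add_sq |Real.sin (2 * π * k)| |Real.sin (π * (ε * η))|,
      sq_abs (Real.sin (2 * π * k)), sq_abs (Real.sin (π * (ε * η))), sin_sq_le_R k,
      Real.sin_sq_le_sq (x := π * (ε * η))]
  rw [Δω_eq_sin, abs_mul, abs_of_nonneg (by positivity), mul_comm 2, mul_assoc]
  exact mul_le_mul_of_nonneg_left hsw (Real.sqrt_nonneg α)

lemma abs_R'_mul_le (ε η k : ℝ) : |R' k * (ε * η)| ≤ 3 * (R k + (π * (ε * η)) ^ 2) := by
  have hc := abs_one_add_two_mul_cos_le (2 * π * k)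
  have hsy : 2 * |Real.sin (2 * π * k) * (π * (ε * η))| ≤ R k + (π * (ε * η)) ^ 2 := by
    rw [abs_mul]
    nlinarith [two_mul_le_add_sq |Real.sin (2 * π * k)| |π * (ε * η)|,
      sq_abs (Real.sin (2 * π * k)), sq_abs (π * (ε * η)), sin_sq_le_R k]
  calc |R' k * (ε * η)|
      = 2 * |Real.sin (2 * π * k) * (π * (ε * η))| * |1 + 2 * Real.cos (2 * π * k)| := by
        rw [R'_eq_sin, ← abs_two, ← abs_mul, ← abs_mul]; ring_nf
    _ ≤ (R k + (π * (ε * η)) ^ 2) * 3 := by gcongr; positivity [R_nonneg k]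
    _ = 3 * (R k + (π * (ε * η)) ^ 2) := mul_comm _ _

lemma abs_Δω_mul_R'_le (α ε η k : ℝ) :
    |Δω α ε η k * R' k| ≤ 12 * π * √α * |π * (ε * η)| * R k := by
  have hc := abs_one_add_two_mul_cos_le (2 * π * k)
  calc |Δω α ε η k * R' k|
      = 4 * π * √α * Real.sin (2 * π * k) ^ 2 *
          (|Real.sin (π * (ε * η))| * |1 + 2 * Real.cos (2 * π * k)|) := by
        rw [Δω_eq_sin, R'_eq_sin, ← abs_mul,
          ← abs_of_nonneg (by positivity : 0 ≤ 4 * π * √α * Real.sin (2 * π * k) ^ 2), ← abs_mul]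
        ring_nf
    _ ≤ 4 * π * √α * R k * (|π * (ε * η)| * 3) := by
        gcongr 4 * π * √α * ?_ * (?_ * ?_)
        exacts [mul_nonneg (by positivity) (R_nonneg k), sin_sq_le_R k, Real.abs_sin_le_abs]
    _ = 12 * π * √α * |π * (ε * η)| * R k := by ring

section Symbol

variable (α : ℝ) {γ ε lam η : ℝ} (k : ℝ)

lemma Rε_bounds (hy : |π * (ε * η)| ≤ 1 / 4) :
    (R k + (π * (ε * η)) ^ 2) / 3 ≤ Rε ε η k ∧ Rε ε η k ≤ 2 * (R k + (π * (ε * η)) ^ 2) := by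
  rw [Rε_eq_R_add, R_eq_cos]
  exact quadratic_perturbation_bounds (Real.neg_one_le_cos _) (Real.cos_le_one _) hy

lemma ωbar_bounds (hy : |π * (ε * η)| ≤ 1) :
    √α * (R k + (π * (ε * η)) ^ 2) / 16 ≤ ωbar α ε η k ∧
      ωbar α ε η k ≤ √α * (R k + (π * (ε * η)) ^ 2) := by
  rw [ωbar_eq_cos, R_eq_cos]
  obtain ⟨hlo, hhi⟩ :=
    one_sub_mul_cos_bounds (Real.neg_one_le_cos (2 * π * k)) (Real.cos_le_one _) hy
  have hsα := Real.sqrt_nonneg α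
  exact ⟨by nlinarith, mul_le_mul_of_nonneg_left hhi hsα⟩

lemma R_add_sq_le_three_mul_Rε (hy : |π * (ε * η)| ≤ 1 / 4) :
    R k + (ε * η) ^ 2 ≤ 3 * Rε ε η k := by
  have hπ : 1 ≤ π ^ 2 := by nlinarith [Real.pi_gt_three]
  nlinarith [(Rε_bounds k hy).1, sq_nonneg (ε * η)]

lemma Rε_nonneg (hy : |π * (ε * η)| ≤ 1 / 4) : 0 ≤ Rε ε η k := by
  nlinarith [R_add_sq_le_three_mul_Rε k hy, R_nonneg k, sq_nonneg (ε * η)]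

lemma Rε_le_two_pi_sq_mul (hy : |π * (ε * η)| ≤ 1 / 4) :
    Rε ε η k ≤ 2 * π ^ 2 * (R k + (ε * η) ^ 2) := by
  have hπ : 1 ≤ π ^ 2 := by nlinarith [Real.pi_gt_three]
  nlinarith [(Rε_bounds k hy).2, R_nonneg k]

lemma Rε_le_mul_ωbar (hα : 0 < α) (hy : |π * (ε * η)| ≤ 1 / 4) :
    Rε ε η k ≤ 32 / √α * ωbar α ε η k := by
  rw [div_mul_eq_mul_div, le_div_iff₀ (Real.sqrt_pos.2 hα)]
  have hN := (Rε_bounds k hy).2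
  nlinarith [(ωbar_bounds α k (hy.trans (by norm_num))).1,
    mul_le_mul_of_nonneg_left hN (Real.sqrt_nonneg α)]

lemma ωbar_le_Rε (hy : |π * (ε * η)| ≤ 1 / 4) : ωbar α ε η k ≤ 3 * √α * Rε ε η k := by
  nlinarith [(Rε_bounds k hy).1, (ωbar_bounds α k (hy.trans (by norm_num))).2,
    Real.sqrt_nonneg α]

lemma abs_Δω_mul_R'_le_Rε (hy : |π * (ε * η)| ≤ 1 / 4) (hε : 0 ≤ ε) :
    |Δω α ε η k * R' k| ≤ 36 * π ^ 2 * √α * |η| * ε * Rε ε η k := by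
  have hRk : R k ≤ 3 * Rε ε η k := by
    nlinarith [R_add_sq_le_three_mul_Rε k hy, sq_nonneg (ε * η)]
  calc |Δω α ε η k * R' k| ≤ 12 * π * √α * |π * (ε * η)| * R k := abs_Δω_mul_R'_le α ε η k
    _ ≤ 12 * π * √α * |π * (ε * η)| * (3 * Rε ε η k) := by gcongr
    _ = 36 * π ^ 2 * √α * |η| * ε * Rε ε η k := by
      rw [abs_mul, abs_mul, abs_of_pos Real.pi_pos, abs_of_nonneg hε]; ring

lemma norm_D_entries_le (hy : |π * (ε * η)| ≤ 1 / 4) (hγ : 0 ≤ γ) (hlam : 0 ≤ lam) :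
    ‖D₁ α γ ε lam η k‖ ≤ (1 + 6 * γ + 6 * √α) * (Rε ε η k + lam * ε ^ 2) ∧
      ‖D₂ α γ ε lam η k‖ ≤ (1 + 6 * γ + 6 * √α) * (Rε ε η k + lam * ε ^ 2) ∧
      |Dplus γ ε η k| ≤ (1 + 6 * γ + 6 * √α) * (Rε ε η k + lam * ε ^ 2) ∧
      |Dminus γ ε η k| ≤ (1 + 6 * γ + 6 * √α) * (Rε ε η k + lam * ε ^ 2) := by
  have hRε := Rε_nonneg k hy
  have hsα := Real.sqrt_nonneg α
  have hlamε : 0 ≤ lam * ε ^ 2 := by positivity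
  have hdiag : |ε ^ 2 * lam + 2 * γ * Rε ε η k| = ε ^ 2 * lam + 2 * γ * Rε ε η k :=
    abs_of_nonneg (by positivity)
  have hΔ : |Δω α ε η k| ≤ 3 * √α * Rε ε η k := by
    nlinarith [abs_Δω_le α ε η k, (Rε_bounds k hy).1]
  have hω := ωbar_le_Rε α k hy
  have hcross : |γ * ε / 2 * R' k * η| ≤ 5 * γ * Rε ε η k := by
    rw [show γ * ε / 2 * R' k * η = γ / 2 * (R' k * (ε * η)) by ring, abs_mul,
      abs_of_nonneg (by positivity)]
    nlinarith [abs_R'_mul_le ε η k, (Rε_bounds k hy).1]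
  have hoff : |-γ * Rε ε η k| = γ * Rε ε η k := by
    rw [neg_mul, abs_neg, abs_of_nonneg (by positivity)]
  have hD₁ : ‖D₁ α γ ε lam η k‖ ≤ |ε ^ 2 * lam + 2 * γ * Rε ε η k| + |Δω α ε η k| := by
    refine (norm_add_le _ _).trans_eq ?_
    rw [norm_mul, Complex.norm_I, one_mul, Complex.norm_real, Complex.norm_real,
      Real.norm_eq_abs, Real.norm_eq_abs]
  have hD₂ : ‖D₂ α γ ε lam η k‖ ≤ |ε ^ 2 * lam + 2 * γ * Rε ε η k| + 2 * ωbar α ε η k := by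
    refine (norm_add_le _ _).trans_eq ?_
    rw [norm_mul, norm_mul, Complex.norm_I, Complex.norm_two, mul_one, Complex.norm_real,
      Complex.norm_real, Real.norm_eq_abs, Real.norm_of_nonneg (ωbar_nonneg α ε η k)]
  refine ⟨?_, ?_, (abs_add_le _ _).trans ?_, (abs_sub _ _).trans ?_⟩ <;>
    nlinarith [mul_nonneg hγ hRε, mul_nonneg hsα hRε, mul_nonneg hγ hlamε, mul_nonneg hsα hlamε]

end Symbol

lemma abs_pi_mul_mul_le_quarter {ε η M : ℝ} (hη : |η| ≤ M) (hε : 0 ≤ ε)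
    (hεM : ε ≤ 1 / (16 * (M + 1))) : |π * (ε * η)| ≤ 1 / 4 := by
  have hM : 0 ≤ M := (abs_nonneg η).trans hη
  rw [le_div_iff₀ (by positivity)] at hεM
  rw [abs_mul, abs_mul, abs_of_pos Real.pi_pos, abs_of_nonneg hε]
  calc π * (ε * |η|) ≤ 4 * (ε * (M + 1)) := by
        gcongr
        · exact Real.pi_le_four
        · linarith
    _ ≤ 1 / 4 := by linarith

theorem basic_symbol_bounds (α γ : ℝ) (hα : 0 < α) (hγ : 0 < γ) (M : ℝ) (hM : 0 < M) :
    ∃ ε₀ ∈ Set.Ioc (0:ℝ) 1, ∃ C : ℝ, 1 ≤ C ∧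
      ∀ (k η ε : ℝ), |η| ≤ M → ε ∈ Set.Ioc 0 ε₀ →
        (C⁻¹ * (R k + (ε * η) ^ 2) ≤ Rε ε η k ∧ Rε ε η k ≤ C * (R k + (ε * η) ^ 2)) ∧
        (C⁻¹ * Rε ε η k ≤ ωbar α ε η k ∧ ωbar α ε η k ≤ C * Rε ε η k) ∧
        |Δω α ε η k * R' k| ≤ C * ε * Rε ε η k ∧
        (∀ lam : ℝ, 0 < lam →
          ‖D₁ α γ ε lam η k‖ ≤ C * (Rε ε η k + lam * ε ^ 2) ∧
          ‖D₂ α γ ε lam η k‖ ≤ C * (Rε ε η k + lam * ε ^ 2) ∧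
          |Dplus γ ε η k| ≤ C * (Rε ε η k + lam * ε ^ 2) ∧
          |Dminus γ ε η k| ≤ C * (Rε ε η k + lam * ε ^ 2)) := by
  have hπ : 9 ≤ π ^ 2 := by nlinarith [Real.pi_gt_three]
  have hsα : 0 < √α := Real.sqrt_pos.2 hα
  have hCω : 0 < 32 / √α := by positivity
  have hCΔ : 0 ≤ 36 * π ^ 2 * √α * M := by positivity
  set C := 2 * π ^ 2 + 32 / √α + 36 * π ^ 2 * √α * M + (1 + 6 * γ + 6 * √α)
  have hC : 3 ≤ C := by linarith
  refine ⟨1 / (16 * (M + 1)), ⟨by positivity, by rw [div_le_one (by positivity)]; linarith⟩,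
    C, by linarith, fun k η ε hη ⟨hε, hεε₀⟩ => ?_⟩
  have hy := abs_pi_mul_mul_le_quarter hη hε.le hεε₀
  have hRε := Rε_nonneg k hy
  have hC₀ : 0 < C := by linarith
  refine ⟨⟨?_, ?_⟩, ⟨?_, ?_⟩, ?_, fun lam hlam => ?_⟩
  · exact (inv_mul_le_iff₀ hC₀).2 ((R_add_sq_le_three_mul_Rε k hy).trans (by gcongr))
  · have hRt : 0 ≤ R k + (ε * η) ^ 2 := add_nonneg (R_nonneg k) (sq_nonneg _)
    exact (Rε_le_two_pi_sq_mul k hy).trans (by gcongr; linarith)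
  · exact (inv_mul_le_iff₀ hC₀).2 ((Rε_le_mul_ωbar α k hα hy).trans
      (by gcongr; exacts [ωbar_nonneg α ε η k, by linarith]))
  · exact (ωbar_le_Rε α k hy).trans (by gcongr; linarith)
  · calc |Δω α ε η k * R' k| ≤ 36 * π ^ 2 * √α * |η| * ε * Rε ε η k :=
          abs_Δω_mul_R'_le_Rε α k hy hε.le
      _ ≤ 36 * π ^ 2 * √α * M * ε * Rε ε η k := by gcongr
      _ ≤ C * ε * Rε ε η k := by gcongr; linarith
  · have hK : (1 + 6 * γ + 6 * √α) * (Rε ε η k + lam * ε ^ 2) ≤ C * (Rε ε η k + lam * ε ^ 2) := by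
      gcongr; linarith
    obtain ⟨h₁, h₂, hplus, hminus⟩ := norm_D_entries_le α k hy hγ.le hlam.le
    exact ⟨h₁.trans hK, h₂.trans hK, hplus.trans hK, hminus.trans hK⟩
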